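/- arXiv:2402.17801 — 3 statements merged into one kernel-verified Lean document; each statement's English description precedes it below -/
import Mathlib

section
/- Let 0 < c_A < c_H < β < 1, λ ∈ (0,1), φ ∈ (0,1], X ∈ [0,1], p ≥ 0. Define u_H(x) = βx − c_H and u_A(x) = φβ(λX + (1−λ)x) − c_A − p. If x₁ < x₂ and u_H(x₁) > max(u_A(x₁), 0), then u_H(x₂) > max(u_A(x₂), 0). -/
/-- Creators with higher skill who see a lower-skilled creator choose human
creation also choose human creation. -/
theorem human_creation_upward_closed
    (cA cH β lam φ X p x₁ x₂ : ℝ)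
    (hcA : 0 < cA) (hAH : cA < cH) (hHβ : cH < β) (hβ : β < 1)
    (hlam : lam ∈ Set.Ioo (0:ℝ) 1) (hφ : φ ∈ Set.Ioc (0:ℝ) 1)
    (hX : X ∈ Set.Icc (0:ℝ) 1) (hp : 0 ≤ p)
    (uH uA : ℝ → ℝ)
    (huH : ∀ x, uH x = β * x - cH)
    (huA : ∀ x, uA x = φ * β * (lam * X + (1 - lam) * x) - cA - p)
    (hx : x₁ < x₂)
    (h₁ : uH x₁ > max (uA x₁) 0) :
    uH x₂ > max (uA x₂) 0 := by
  obtain ⟨hl0, hl1⟩ := hlam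
  obtain ⟨hφ0, hφ1⟩ := hφ
  have hβ0 : (0:ℝ) < β := lt_trans (lt_trans hcA hAH) hHβ
  rw [huH, huA] at *
  rw [gt_iff_lt, max_lt_iff] at h₁ ⊢
  constructor
  · have key : φ * β * (1 - lam) * (x₂ - x₁) ≤ β * (x₂ - x₁) := by
      apply mul_le_mul_of_nonneg_right _ (sub_pos.mpr hx).le
      nlinarith [mul_le_one₀ hφ1 hβ0.le hβ.le, mul_pos (mul_pos hφ0 hβ0) hl0]
    nlinarith [h₁.1]
  · nlinarith [h₁.2, mul_pos hβ0 (sub_pos.mpr hx)]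
end

section
/- Let w(X₂, p₂) = ∫_{x̲(X₂,p₂)}^{x̄(X₂,p₂)} (λX₂ + (1−λ)x − c_A) dx + ∫_{x̄(X₂,p₂)}^{1} (x − c_H) dx, where on the region X₂ ∈ [max(0, X_A(p₂)), min(1, X_H(p₂))] one has x̄ = x_HA(X₂,p₂) with ∂x_HA/∂X₂ = λφ/(1−(1−λ)φ) ∈ (0,1) and x̲ = x_AO(X₂,p₂) with ∂x_AO/∂X₂ = −λ/(1−λ). Then on this region ∂²w/∂X₂² > 0, i.e., w is strictly convex in X₂. -/
/-!
Both thresholds `x_HA` and `x_AO` are affine in the quality `X`, and the integrands are affine in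
`x`, so `w` is a quadratic polynomial in `X` whose leading coefficient is half the second
derivative `w''` from the paper. Since `x_AO' = -λ/(1-λ)`, the term `λ + (1-λ) x_AO'` of `w''`
vanishes, leaving `w'' = λ x_HA' + λ (1 - x_HA') x_HA' + λ²/(1-λ) > 0` as `0 < x_HA' < 1`.
-/

open intervalIntegral

theorem integral_const_add_mul_id (u v C k : ℝ) :
    ∫ x in u..v, (C + k * x) = C * (v - u) + k * (v ^ 2 - u ^ 2) / 2 := by
  rw [integral_add intervalIntegrable_const (intervalIntegrable_id.const_mul k),
    integral_const, integral_const_mul, integral_id, smul_eq_mul]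
  ring

theorem strictConvexOn_of_convexity_gap_eq {s : Set ℝ} (hs : Convex ℝ s) {f : ℝ → ℝ} {a : ℝ}
    (ha : 0 < a)
    (hgap : ∀ x y t, t * f x + (1 - t) * f y - f (t * x + (1 - t) * y)
      = a * t * (1 - t) * (x - y) ^ 2) :
    StrictConvexOn ℝ s f := by
  refine ⟨hs, fun x _ y _ hxy t t' ht ht' htt' => ?_⟩
  obtain rfl : t' = 1 - t := by linarith
  have hsq : 0 < (x - y) ^ 2 := sq_pos_of_ne_zero (sub_ne_zero.mpr hxy)
  have := hgap x y t
  simp only [smul_eq_mul]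
  nlinarith [mul_pos (mul_pos (mul_pos ha ht) ht') hsq]

/-- The paper's `∂²w/∂X²` when `x_HA` and `x_AO` have slopes `sH` and `sA` in `X`. -/
def welfareSecondDeriv (lam sH sA : ℝ) : ℝ :=
  lam * (sH - sA) + lam * (1 - sH) * sH - (lam + (1 - lam) * sA) * sA

theorem strictConvexOn_welfare {s : Set ℝ} (hs : Convex ℝ s)
    {lam cA cH sH bH sA bA : ℝ} {xHA xAO w : ℝ → ℝ}
    (hxHA : ∀ X, xHA X = sH * X + bH) (hxAO : ∀ X, xAO X = sA * X + bA)
    (hw : ∀ X, w X = (∫ x in (xAO X)..(xHA X), (lam * X + (1 - lam) * x - cA)) +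
      ∫ x in (xHA X)..1, (x - cH))
    (hpos : 0 < welfareSecondDeriv lam sH sA) :
    StrictConvexOn ℝ s w := by
  have hclosed : ∀ X u v : ℝ,
      (∫ x in u..v, (lam * X + (1 - lam) * x - cA)) + ∫ x in v..1, (x - cH)
        = (lam * X - cA) * (v - u) + (1 - lam) * (v ^ 2 - u ^ 2) / 2
          + (-cH * (1 - v) + (1 - v ^ 2) / 2) := by
    intro X u v
    have hHA : ∫ x in u..v, (lam * X + (1 - lam) * x - cA)
        = ∫ x in u..v, ((lam * X - cA) + (1 - lam) * x) := integral_congr fun x _ => by ring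
    have hH : ∫ x in v..1, (x - cH) = ∫ x in v..1, (-cH + 1 * x) :=
      integral_congr fun x _ => by ring
    rw [hHA, hH, integral_const_add_mul_id, integral_const_add_mul_id]
    ring
  refine strictConvexOn_of_convexity_gap_eq hs (half_pos hpos) fun x y t => ?_
  simp only [hw, hclosed, hxHA, hxAO, welfareSecondDeriv]
  ring

theorem welfareSecondDeriv_pos {lam sH : ℝ} (hlam₀ : 0 < lam) (hlam₁ : lam < 1)
    (hsH₀ : 0 < sH) (hsH₁ : sH < 1) :
    0 < welfareSecondDeriv lam sH (-(lam / (1 - lam))) := by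
  have hlam' : 0 < 1 - lam := sub_pos.mpr hlam₁
  have hcancel : lam + (1 - lam) * -(lam / (1 - lam)) = 0 := by field_simp; ring
  rw [welfareSecondDeriv, hcancel, zero_mul, sub_zero, sub_neg_eq_add]
  have : 0 < lam / (1 - lam) := div_pos hlam₀ hlam'
  have : 0 < 1 - sH := sub_pos.mpr hsH₁
  positivity

theorem welfare_convex_in_quality_general
    (β lam φ cA cH p : ℝ)
    (hβ : β ∈ Set.Ioo (0:ℝ) 1) (hlam : lam ∈ Set.Ioo (0:ℝ) 1)
    (hφ : φ ∈ Set.Ioo (0:ℝ) 1) (hden : 0 < 1 - (1 - lam) * φ)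
    (xHA xAO : ℝ → ℝ) (XA XH : ℝ) (w : ℝ → ℝ)
    (hxHA : ∀ X, xHA X = (lam * φ * β * X + cH - cA - p) / ((1 - (1 - lam) * φ) * β))
    (hxAO : ∀ X, xAO X = (cA + p - lam * φ * β * X) / ((1 - lam) * φ * β))
    (hw : ∀ X, w X = (∫ x in (xAO X)..(xHA X), (lam * X + (1 - lam) * x - cA)) +
      ∫ x in (xHA X)..1, (x - cH)) :
    StrictConvexOn ℝ (Set.Icc (max 0 XA) (min 1 XH)) w := by
  obtain ⟨hβ₀, -⟩ := hβ
  obtain ⟨hlam₀, hlam₁⟩ := hlam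
  obtain ⟨hφ₀, hφ₁⟩ := hφ
  have hlam' : 1 - lam ≠ 0 := (sub_pos.mpr hlam₁).ne'
  set sH := lam * φ / (1 - (1 - lam) * φ)
  have hxHA' : ∀ X, xHA X = sH * X + (cH - cA - p) / ((1 - (1 - lam) * φ) * β) := by
    intro X; rw [hxHA]; simp only [sH]; field_simp; ring
  have hxAO' : ∀ X, xAO X = -(lam / (1 - lam)) * X + (cA + p) / ((1 - lam) * φ * β) := by
    intro X; rw [hxAO]; field_simp; ring
  have hsH₀ : 0 < sH := by positivity
  have hsH₁ : sH < 1 := by rw [div_lt_one hden]; nlinarith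
  exact strictConvexOn_welfare (convex_Icc _ _) hxHA' hxAO' hw
    (welfareSecondDeriv_pos hlam₀ hlam₁ hsH₀ hsH₁)

/-- Period-2 social welfare is strictly convex in model quality on the
interior regime. -/
theorem welfare_convex_in_quality
    (β lam φ cA cH p : ℝ)
    (hβ : β ∈ Set.Ioo (0:ℝ) 1) (hlam : lam ∈ Set.Ioo (0:ℝ) 1)
    (hφ : φ ∈ Set.Ioo (0:ℝ) 1) (hden : 0 < 1 - (1 - lam) * φ)
    (hcA : 0 < cA) (hc : cA < cH) (hcβ : cH < β) (hp : 0 ≤ p)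
    (xHA xAO : ℝ → ℝ) (XA XH : ℝ) (w : ℝ → ℝ)
    (hxHA : ∀ X, xHA X = (lam * φ * β * X + cH - cA - p) / ((1 - (1 - lam) * φ) * β))
    (hxAO : ∀ X, xAO X = (cA + p - lam * φ * β * X) / ((1 - lam) * φ * β))
    (hXA : XA = (cA + p - (1 - lam) * φ * cH) / (lam * φ * β))
    (hXH : XH = (cA + p + (1 - (1 - lam) * φ) * β - cH) / (lam * φ * β))
    (hlt : max 0 XA < min 1 XH)
    (hinterior : ∀ X ∈ Set.Icc (max 0 XA) (min 1 XH),
      0 < xAO X ∧ xAO X < xHA X ∧ xHA X < 1)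
    (hw : ∀ X, w X = (∫ x in (xAO X)..(xHA X), (lam * X + (1 - lam) * x - cA)) +
      ∫ x in (xHA X)..1, (x - cH)) :
    StrictConvexOn ℝ (Set.Icc (max 0 XA) (min 1 XH)) w :=
  welfare_convex_in_quality_general β lam φ cA cH p hβ hlam hφ hden xHA xAO XA XH w hxHA hxAO hw
end

section
/- Let w₂(X₂, p₂) be Period-2 social welfare as in the paper, with thresholds from Table 1 and parameters β, λ ∈ (0,1), φ ∈ ((β−c_H)/(β(1−λ)), 1], 0 < c_A < c_H < β, and c_A < φ(λβ + (1−λ)c_H). If X₂ ≥ min(1, X_H(p₂)) (so x̄ = 1 and all producing creators use AI), then ∂w₂/∂X₂ ≥ 0; i.e., w₂(1, p₂) ≥ w₂(X₂, p₂) for all X₂ ∈ [min(1, X_H(p₂)), 1]. -/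
open intervalIntegral

set_option maxHeartbeats 1000000

/-- In the all-AI regime, Period-2 social welfare is nondecreasing in model
quality, hence maximized at X₂ = 1. -/
theorem welfare_monotone_all_AI_regime
    (β lam φ cA cH p : ℝ)
    (hβ : β ∈ Set.Ioo (0:ℝ) 1) (hlam : lam ∈ Set.Ioo (0:ℝ) 1)
    (hφlow : (β - cH) / (β * (1 - lam)) < φ) (hφhi : φ ≤ 1)
    (hcA : 0 < cA) (hc : cA < cH) (hcβ : cH < β)
    (hviable : cA < φ * (lam * β + (1 - lam) * cH)) (hp : 0 ≤ p)
    (xAO : ℝ → ℝ) (XH : ℝ) (w₂ : ℝ → ℝ)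
    (hxAO : ∀ X, xAO X = (cA + p - lam * φ * β * X) / ((1 - lam) * φ * β))
    (hXH : XH = (cA + p + (1 - (1 - lam) * φ) * β - cH) / (lam * φ * β))
    (hw : ∀ X, w₂ X = ∫ x in (max 0 (xAO X))..1, (lam * X + (1 - lam) * x - cA)) :
    MonotoneOn w₂ (Set.Icc (min 1 XH) 1) ∧
    ∀ X ∈ Set.Icc (min 1 XH) 1, w₂ X ≤ w₂ 1 := by
  obtain ⟨hβ0, hβ1⟩ := hβ
  obtain ⟨hl0, hl1⟩ := hlam
  have hl1' : 0 < 1 - lam := by linarith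
  have hφ0 : 0 < φ := lt_trans (div_pos (by linarith) (by positivity)) hφlow
  have hφβ0 : (0:ℝ) < φ * β := mul_pos hφ0 hβ0
  have hK : (0:ℝ) < (1 - lam) * φ * β := by positivity
  have hKl : (0:ℝ) < lam * φ * β := by positivity
  have hφβ : φ * β < 1 := by nlinarith
  -- closed form for w₂
  have hwc : ∀ X, w₂ X = (lam * X - cA) * (1 - max 0 (xAO X))
      + (1 - lam) * (1 - (max 0 (xAO X))^2) / 2 := by
    intro X
    rw [hw X]
    set L := max 0 (xAO X) with hL
    have h2 : IntervalIntegrable (fun x : ℝ => (1 - lam) * x) MeasureTheory.volume L 1 :=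
      (by fun_prop : Continuous (fun x : ℝ => (1 - lam) * x)).intervalIntegrable _ _
    have heq : (∫ x in L..1, (lam * X + (1 - lam) * x - cA))
        = ∫ x in L..1, ((lam * X - cA) + (1 - lam) * x) := by
      apply intervalIntegral.integral_congr
      intro x _; ring
    rw [heq, intervalIntegral.integral_add intervalIntegrable_const h2,
      intervalIntegral.integral_const, intervalIntegral.integral_const_mul, integral_id]
    simp [smul_eq_mul]; ring
  -- linear relation for xAO
  have hx : ∀ X, (1 - lam) * φ * β * xAO X = cA + p - lam * φ * β * X := by
    intro X
    rw [hxAO X]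
    field_simp
  -- lower-endpoint value of the integrand is ≥ 0 when xAO > 0
  have hE : ∀ X, 0 < xAO X → cA ≤ lam * X + (1 - lam) * xAO X := by
    intro X hX
    have e := hx X
    have hS : φ * β * (lam * X + (1 - lam) * xAO X) = cA + p := by linear_combination e
    have hS0 : 0 < lam * X + (1 - lam) * xAO X := by nlinarith
    nlinarith [mul_nonneg hS0.le (show (0:ℝ) ≤ 1 - φ * β by linarith)]
  -- key monotonicity fact
  have key : ∀ a ∈ Set.Icc (min 1 XH) 1, ∀ b ∈ Set.Icc (min 1 XH) 1, a ≤ b → w₂ a ≤ w₂ b := by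
    intro a ha b hb hab
    rcases le_or_gt 1 XH with hX1 | hX1
    · -- degenerate: interval is {1}
      have hmin : min 1 XH = 1 := min_eq_left hX1
      rw [hmin] at ha hb
      have : a = b := by
        have h1 := ha.1; have h2 := ha.2; have h3 := hb.1; have h4 := hb.2; linarith
      rw [this]
    · -- XH < 1, so min = XH and a, b ∈ [XH, 1]
      have hmin : min 1 XH = XH := min_eq_right hX1.le
      rw [hmin] at ha hb
      obtain ⟨haL, haU⟩ := ha
      obtain ⟨hbL, hbU⟩ := hb
      have hXHval : lam * φ * β * XH = cA + p + (1 - (1 - lam) * φ) * β - cH := by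
        rw [hXH]; field_simp
      set xa := xAO a with hxa
      set xb := xAO b with hxb
      have ea : (1 - lam) * φ * β * xa = cA + p - lam * φ * β * a := hx a
      have eb : (1 - lam) * φ * β * xb = cA + p - lam * φ * β * b := hx b
      -- xa < 1 since a ≥ XH
      have hxa1 : xa < 1 := by
        have h1 : lam * φ * β * XH ≤ lam * φ * β * a :=
          mul_le_mul_of_nonneg_left haL hKl.le
        have h2 : (1 - lam) * φ * β * xa ≤ (1 - lam) * φ * β - (β - cH) := by linarith
        nlinarith
      -- xb ≤ xa
      have hrel : (1 - lam) * (xa - xb) = lam * (b - a) := by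
        have h' : (φ * β) * ((1 - lam) * (xa - xb)) = (φ * β) * (lam * (b - a)) := by
          linear_combination ea - eb
        exact mul_left_cancel₀ (ne_of_gt hφβ0) h'
      have hba : xb ≤ xa := by nlinarith
      rw [hwc a, hwc b, ← hxa, ← hxb]
      rcases le_or_gt xa 0 with hxa0 | hxa0
      · -- both cutoffs are 0
        have hxb0 : xb ≤ 0 := le_trans hba hxa0
        rw [max_eq_left hxa0, max_eq_left hxb0]
        nlinarith
      · rcases le_or_gt xb 0 with hxb0 | hxb0
        · -- La = xa > 0, Lb = 0
          rw [max_eq_right hxa0.le, max_eq_left hxb0]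
          have hEa : cA ≤ lam * a + (1 - lam) * xa := hE a hxa0
          have hKb : (1 - lam) * φ * β * xb ≤ 0 :=
            mul_nonpos_of_nonneg_of_nonpos hK.le hxb0
          have h1 : φ * β * ((1 - lam) * xa) ≤ φ * β * (lam * (b - a)) := by linarith
          have h1' : (1 - lam) * xa ≤ lam * (b - a) :=
            le_of_mul_le_mul_left h1 hφβ0
          nlinarith [mul_nonneg hxa0.le (sub_nonneg.2 hEa),
            mul_le_mul_of_nonneg_right h1' hxa0.le,
            mul_le_mul_of_nonneg_left hxa1.le
              (mul_nonneg hl0.le (sub_nonneg.2 hab))]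
        · -- both positive
          rw [max_eq_right hxa0.le, max_eq_right hxb0.le]
          have hEa : cA ≤ lam * a + (1 - lam) * xa := hE a hxa0
          have hrel2 : (1 - lam) * (xa - xb) * (xa - xb) = lam * (b - a) * (xa - xb) := by
            rw [hrel]
          nlinarith [mul_nonneg (mul_nonneg hl0.le (sub_nonneg.2 hab))
              (show (0:ℝ) ≤ 1 - (xa + xb)/2 by nlinarith),
            mul_nonneg (sub_nonneg.2 hba) (sub_nonneg.2 hEa), hrel2]
  exact ⟨fun a ha b hb hab => key a ha b hb hab,
    fun X hX => key X hX 1 ⟨min_le_left _ _, le_refl 1⟩ hX.2⟩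
end
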